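/- arXiv:1409.7904 — 3 statements merged into one kernel-verified Lean document; each statement's English description precedes it below -/
import Mathlib

section
/- If R is a periodic ring and M is an R-R-bimodule, then the trivial extension T(R, M) = R ⊕ M, with multiplication (r₁, m₁)(r₂, m₂) = (r₁r₂, r₁m₂ + m₁r₂), is a periodic ring; conversely, if T(R, M) is periodic then so is R. -/
/-!
Given `x` in the trivial extension, periodicity of `x.fst` provides a power `y = x ^ e` whose first
coordinate `s` is idempotent. Then `y ^ (k + 2) = y ^ 2 + k • inr (s v s)`, where `v = y.snd`, and
since a periodic ring has positive characteristic `c`, this gives `y ^ (c + 2) = y ^ 2`.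
Conversely, `R` embeds in the trivial extension via `inl`.
-/

/-- A ring is periodic if every element satisfies `a ^ m = a ^ n` for distinct `m, n`. -/
def IsPeriodicRing (R : Type*) [Ring R] : Prop :=
  ∀ a : R, ∃ m n : ℕ, m ≠ n ∧ a ^ m = a ^ n

open scoped RightActions

open TrivSqZeroExt

section Monoid

variable {M : Type*} [Monoid M] {a : M}

theorem pow_add_mul_eq_of_pow_add_eq {m d i : ℕ} (h : a ^ (m + d) = a ^ m) (hi : m ≤ i) (k : ℕ) :
    a ^ (i + k * d) = a ^ i := by
  obtain ⟨j, rfl⟩ := Nat.exists_eq_add_of_le hi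
  induction k with
  | zero => simp
  | succ k ih =>
    rw [show m + j + (k + 1) * d = m + d + (j + k * d) by ring, pow_add, h, ← pow_add,
      ← add_assoc, ih]

theorem exists_isIdempotentElem_pow_of_pow_eq_pow {m n : ℕ} (hmn : m ≠ n) (h : a ^ m = a ^ n) :
    ∃ e, 0 < e ∧ IsIdempotentElem (a ^ e) := by
  wlog hlt : m < n generalizing m n
  · exact this hmn.symm h.symm (by omega)
  obtain ⟨d, rfl⟩ := Nat.exists_eq_add_of_lt hlt
  -- any multiple of the period `d + 1` that is at least `m` will do
  refine ⟨(m + 1) * (d + 1), by positivity, ?_⟩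
  rw [IsIdempotentElem, ← pow_add]
  exact pow_add_mul_eq_of_pow_add_eq (m := m) (d := d + 1) (by rw [← add_assoc, h]) (by nlinarith) _

end Monoid

theorem IsPeriodicRing.ringChar_ne_zero {R : Type*} [Ring R] (hR : IsPeriodicRing R) :
    ringChar R ≠ 0 := by
  obtain ⟨m, n, hmn, h⟩ := hR 2
  wlog hlt : m < n generalizing m n
  · exact this n m hmn.symm h.symm (by omega)
  have hpow : 2 ^ m < 2 ^ n := Nat.pow_lt_pow_right (by norm_num) hlt
  have hcast : ((2 ^ n - 2 ^ m : ℕ) : R) = 0 := by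
    rw [Nat.cast_sub hpow.le]
    push_cast
    rw [h, sub_self]
  exact ne_zero_of_dvd_ne_zero (by omega) (ringChar.dvd hcast)

theorem IsPeriodicRing.of_injective {R S : Type*} [Ring R] [Ring S] {f : R →+* S}
    (hf : Function.Injective f) (hS : IsPeriodicRing S) : IsPeriodicRing R := fun a => by
  obtain ⟨m, n, hmn, h⟩ := hS (f a)
  exact ⟨m, n, hmn, hf (by rw [map_pow, map_pow, h])⟩

namespace TrivSqZeroExt

variable {R M : Type*} [Ring R] [AddCommGroup M] [Module R M] [Module Rᵐᵒᵖ M]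
  [SMulCommClass R Rᵐᵒᵖ M]

theorem pow_add_two_of_isIdempotentElem_fst {x : TrivSqZeroExt R M} (hx : IsIdempotentElem x.fst)
    (k : ℕ) : x ^ (k + 2) = x ^ 2 + k • inr (x.fst •> x.snd <• x.fst) := by
  have hright : ∀ m : M, m <• x.fst <• x.fst = m <• x.fst := fun m => by
    rw [smul_smul, ← MulOpposite.op_mul, hx.eq]
  have hcube : x ^ 3 = x ^ 2 + inr (x.fst •> x.snd <• x.fst) := by
    ext
    · simp [hx.pow_succ_eq]
    · simp only [pow_succ, pow_zero, one_mul, snd_mul, fst_mul, hx.eq, smul_add, hright, snd_add,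
        snd_inr]
      abel
  have hinr : inr (x.fst •> x.snd <• x.fst) * x = inr (x.fst •> x.snd <• x.fst) := by
    ext <;> simp [snd_mul, hright]
  induction k with
  | zero => simp
  | succ k ih =>
    rw [pow_succ, ih, add_mul, ← pow_succ, hcube, smul_mul_assoc, hinr, succ_nsmul]
    abel

theorem ringChar_nsmul_eq_zero (x : TrivSqZeroExt R M) : ringChar R • x = 0 := by
  rw [nsmul_eq_mul, ← inl_natCast, ringChar.Nat.cast_ringChar, inl_zero, zero_mul]

end TrivSqZeroExt

theorem IsPeriodicRing.trivSqZeroExt {R M : Type*} [Ring R] [AddCommGroup M] [Module R M]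
    [Module Rᵐᵒᵖ M] [SMulCommClass R Rᵐᵒᵖ M] (hR : IsPeriodicRing R) :
    IsPeriodicRing (TrivSqZeroExt R M) := fun x => by
  obtain ⟨m, n, hmn, h⟩ := hR x.fst
  obtain ⟨e, he, hidem⟩ := exists_isIdempotentElem_pow_of_pow_eq_pow hmn h
  have hperiod : (x ^ e) ^ (ringChar R + 2) = (x ^ e) ^ 2 := by
    rw [pow_add_two_of_isIdempotentElem_fst (by rwa [fst_pow]), ringChar_nsmul_eq_zero, add_zero]
  refine ⟨e * (ringChar R + 2), e * 2, ?_, by rw [pow_mul, pow_mul, hperiod]⟩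
  have hchar := hR.ringChar_ne_zero
  exact (mul_right_injective₀ he.ne').ne (by omega)

theorem trivialExtension_periodic_iff (R : Type*) [Ring R] (M : Type*) [AddCommGroup M]
    [Module R M] [Module Rᵐᵒᵖ M] [SMulCommClass R Rᵐᵒᵖ M] :
    IsPeriodicRing R ↔ IsPeriodicRing (TrivSqZeroExt R M) :=
  ⟨IsPeriodicRing.trivSqZeroExt, IsPeriodicRing.of_injective (f := inlHom R M) inl_injective⟩
end

section
/- A ring R is strongly periodic if and only if for every a ∈ R there exists a potent element p ∈ R such that a - p ∈ P(R) (i.e., the commutativity condition ap = pa in the definition is automatic). -/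
/-- A two-sided ideal `P` is prime if it is proper and `aRb ⊆ P` implies `a ∈ P` or `b ∈ P`. -/
def TwoSidedIdeal.IsPrime {R : Type*} [Ring R] (P : TwoSidedIdeal R) : Prop :=
  (P : Set R) ≠ Set.univ ∧ ∀ a b : R, (∀ r : R, a * r * b ∈ P) → a ∈ P ∨ b ∈ P

/-- The prime radical `P(R)`: the intersection of all prime (two-sided) ideals of `R`. -/
def primeRadical (R : Type*) [Ring R] : TwoSidedIdeal R :=
  sInf {P : TwoSidedIdeal R | P.IsPrime}

/-- An element `p` is potent if `p = p ^ m` for some `m ≥ 2`. -/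
def IsPotent {R : Type*} [Ring R] (p : R) : Prop :=
  ∃ m : ℕ, 2 ≤ m ∧ p = p ^ m

/-- A ring is strongly periodic if every element is the sum of a commuting potent element
and an element of the prime radical. -/
def StronglyPeriodicRing (R : Type*) [Ring R] : Prop :=
  ∀ a : R, ∃ p : R, IsPotent p ∧ a - p ∈ primeRadical R ∧ a * p = p * a

/-!
The commuting potent element can always be taken to be a power of `a`. First, `P(R)` is nil: an
ideal maximal among those avoiding the powers of a non-nilpotent element is prime. Applied to `2`,
the hypothesis makes `2 - 2 ^ (k + 1)` nilpotent for some `k > 0`, so `R` has positive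
characteristic; applied to `a`, it makes `a - a ^ (k + 1)` nilpotent, so `a` is integral over
`ZMod (ringChar R)` and has only finitely many powers. Hence `a ^ (i + d) = a ^ i` with `d > 0`,
and `a ^ (i * k + 1)` is potent, commutes with `a` and is congruent to `a` modulo `P(R)`.
-/
section Monoid

variable {M : Type*} [Monoid M]

theorem pow_add_mul_eq_pow_of_pow_add_eq_pow {a : M} {i d k : ℕ} (h : a ^ (i + d) = a ^ i)
    (hik : i ≤ k) (s : ℕ) : a ^ (k + s * d) = a ^ k := by
  obtain ⟨j, rfl⟩ := Nat.exists_eq_add_of_le hik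
  induction s with
  | zero => simp
  | succ s ih =>
    calc a ^ (i + j + (s + 1) * d) = a ^ (i + d) * a ^ (j + s * d) := by rw [← pow_add]; ring_nf
      _ = a ^ (i + j + s * d) := by rw [h, ← pow_add]; ring_nf
      _ = a ^ (i + j) := ih

end Monoid

namespace TwoSidedIdeal

variable {R : Type*}

theorem mem_sSup_of_directedOn [NonUnitalNonAssocRing R] {c : Set (TwoSidedIdeal R)} (hne : c.Nonempty)
    (hc : DirectedOn (· ≤ ·) c) {x : R} : x ∈ sSup c ↔ ∃ I ∈ c, x ∈ I := by
  refine ⟨fun hx => ?_, fun ⟨I, hI, hx⟩ => le_sSup hI hx⟩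
  let U : TwoSidedIdeal R := .mk' {x | ∃ I ∈ c, x ∈ I}
    (let ⟨I, hI⟩ := hne; ⟨I, hI, I.zero_mem⟩)
    (fun ⟨I, hI, hx⟩ ⟨J, hJ, hy⟩ =>
      let ⟨K, hK, hIK, hJK⟩ := hc I hI J hJ; ⟨K, hK, K.add_mem (hIK hx) (hJK hy)⟩)
    (fun ⟨I, hI, hx⟩ => ⟨I, hI, I.neg_mem hx⟩)
    (fun ⟨I, hI, hx⟩ => ⟨I, hI, I.mul_mem_left _ _ hx⟩)
    (fun ⟨I, hI, hx⟩ => ⟨I, hI, I.mul_mem_right _ _ hx⟩)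
  have hcU : sSup c ≤ U := sSup_le fun I hI y hy => (mem_mk' ..).mpr ⟨I, hI, hy⟩
  simpa [U] using hcU hx

section Sandwich

variable [NonUnitalRing R] {M : TwoSidedIdeal R} {a b : R} (h : ∀ r, a * r * b ∈ M)
include h

theorem mul_mul_mem_of_mem_sup_span_left {u : R} (hu : u ∈ M ⊔ span {a}) (r : R) :
    u * r * b ∈ M := by
  obtain ⟨y, hy, z, hz, rfl⟩ := mem_sup.mp hu
  clear hu
  rw [add_mul, add_mul]
  refine M.add_mem (M.mul_mem_right _ _ (M.mul_mem_right _ _ hy)) ?_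
  induction hz using span_induction generalizing r with
  | mem x hx => rw [Set.mem_singleton_iff.mp hx]; exact h r
  | zero => simp
  | add x y _ _ hx hy => rw [add_mul, add_mul]; exact M.add_mem (hx r) (hy r)
  | neg x _ hx => simpa using M.neg_mem (hx r)
  | left_absorb s x _ hx => simpa [mul_assoc] using M.mul_mem_left s _ (hx r)
  | right_absorb s x _ hx => simpa [mul_assoc] using hx (s * r)

theorem mul_mul_mem_of_mem_sup_span_right {v : R} (hv : v ∈ M ⊔ span {b}) (r : R) :
    a * r * v ∈ M := by
  obtain ⟨y, hy, z, hz, rfl⟩ := mem_sup.mp hv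
  clear hv
  rw [mul_add]
  refine M.add_mem (M.mul_mem_left _ _ hy) ?_
  induction hz using span_induction generalizing r with
  | mem x hx => rw [Set.mem_singleton_iff.mp hx]; exact h r
  | zero => simp
  | add x y _ _ hx hy => rw [mul_add]; exact M.add_mem (hx r) (hy r)
  | neg x _ hx => simpa using M.neg_mem (hx r)
  | left_absorb s x _ hx => simpa [mul_assoc] using hx (r * s)
  | right_absorb s x _ hx => simpa [mul_assoc] using M.mul_mem_right _ s (hx r)

end Sandwich

variable [Ring R]

theorem mul_mem_of_mem_sup_span {M : TwoSidedIdeal R} {a b u v : R} (h : ∀ r, a * r * b ∈ M)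
    (hu : u ∈ M ⊔ span {a}) (hv : v ∈ M ⊔ span {b}) : u * v ∈ M := by
  simpa using mul_mul_mem_of_mem_sup_span_right (mul_mul_mem_of_mem_sup_span_left h hu) hv 1

theorem isPrime_of_maximal_pow_succ_notMem {x : R} {M : TwoSidedIdeal R}
    (hM : Maximal (fun I : TwoSidedIdeal R => ∀ n, x ^ (n + 1) ∉ I) M) : M.IsPrime := by
  have hpow : ∀ y ∉ M, ∃ n, x ^ (n + 1) ∈ M ⊔ span {y} := fun y hy => by
    by_contra! h
    exact hy (hM.2 h le_sup_left (mem_sup_right (subset_span rfl)))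
  refine ⟨fun htop => hM.1 0 (by simp [← SetLike.mem_coe, htop]), fun a b hab => ?_⟩
  by_contra! hab'
  obtain ⟨i, hi⟩ := hpow a hab'.1
  obtain ⟨j, hj⟩ := hpow b hab'.2
  refine hM.1 (i + j + 1) ?_
  rw [show i + j + 1 + 1 = (i + 1) + (j + 1) by ring, pow_add]
  exact mul_mem_of_mem_sup_span hab hi hj

theorem exists_sub_pow_succ_mem (I : TwoSidedIdeal R) {a : R}
    (h : ∃ p, IsPotent p ∧ a - p ∈ I) : ∃ k, 0 < k ∧ a - a ^ (k + 1) ∈ I := by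
  obtain ⟨p, ⟨m, hm, hp⟩, hap⟩ := h
  refine ⟨m - 1, by omega, ?_⟩
  rw [Nat.sub_add_cancel (by omega), ← rel_iff] at *
  have hpow := I.ringCon.toCon.pow m hap
  rw [← hp] at hpow
  exact I.ringCon.trans hap (I.ringCon.symm hpow)

theorem sub_pow_mul_add_one_mem (I : TwoSidedIdeal R) {a : R} {k : ℕ}
    (h : a - a ^ (k + 1) ∈ I) (s : ℕ) : a - a ^ (s * k + 1) ∈ I := by
  rw [← rel_iff] at h ⊢
  induction s with
  | zero => simpa using I.ringCon.refl a
  | succ s ih =>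
    have step := I.ringCon.mul ih (I.ringCon.refl (a ^ k))
    rw [← pow_succ', ← pow_add] at step
    convert I.ringCon.trans h step using 2
    ring

end TwoSidedIdeal

open TwoSidedIdeal

section Ring

variable {R : Type*} [Ring R]

theorem isNilpotent_of_mem_primeRadical {x : R} (hx : x ∈ primeRadical R) : IsNilpotent x := by
  by_contra hnil
  obtain ⟨M, -, hM⟩ := zorn_le_nonempty₀ {I : TwoSidedIdeal R | ∀ n, x ^ (n + 1) ∉ I}
    (fun c hcS hc I hI => ⟨sSup c, fun n hn => by
      obtain ⟨J, hJ, hxJ⟩ := (mem_sSup_of_directedOn ⟨I, hI⟩ hc.directedOn).mp hn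
      exact hcS hJ n hxJ, fun J hJ => le_sSup hJ⟩)
    ⊥ (fun n hn => hnil ⟨n + 1, (mem_bot R).mp hn⟩)
  exact hM.1 0 (by simpa using (mem_sInf R).mp hx M (isPrime_of_maximal_pow_succ_notMem hM))

theorem ringChar_ne_zero_of_isNilpotent_intCast {n : ℤ} (hn : n ≠ 0) (h : IsNilpotent (n : R)) :
    ringChar R ≠ 0 := by
  obtain ⟨t, ht⟩ := h
  intro h0
  have hdvd := (CharP.intCast_eq_zero_iff R (ringChar R) (n ^ t)).mp (by push_cast; exact ht)
  rw [h0, Nat.cast_zero, zero_dvd_iff] at hdvd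
  exact hn (pow_eq_zero_iff'.mp hdvd).1

theorem isPotent_pow_of_pow_add_eq_pow {a : R} {i d k : ℕ} (hd : 0 < d)
    (h : a ^ (i + d) = a ^ i) (hik : i ≤ k) : IsPotent (a ^ k) := by
  refine ⟨d + 1, by omega, ?_⟩
  rw [← pow_mul, show k * (d + 1) = k + k * d by ring,
    pow_add_mul_eq_pow_of_pow_add_eq_pow h hik]

theorem isIntegral_of_isNilpotent_sub_pow_succ {K : Type*} [CommRing K] [Algebra K R] {a : R}
    {k : ℕ} (hk : 0 < k) (h : IsNilpotent (a - a ^ (k + 1))) : IsIntegral K a := by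
  obtain ⟨n, hn⟩ := h
  refine ⟨((Polynomial.X : Polynomial K) ^ (k + 1) - Polynomial.X) ^ n, ?_, ?_⟩
  · refine (Polynomial.monic_X_pow_sub ?_).pow n
    exact Polynomial.degree_X_le.trans_lt (by exact_mod_cast (by omega : 1 < k + 1))
  · rw [← Polynomial.aeval_def]
    simp only [map_pow, map_sub, Polynomial.aeval_X]
    rw [← neg_sub, neg_pow, hn, mul_zero]

theorem exists_pow_add_eq_pow_of_isIntegral {K : Type*} [CommRing K] [Finite K] [Algebra K R]
    {a : R} (h : IsIntegral K a) : ∃ i d, 0 < d ∧ a ^ (i + d) = a ^ i := by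
  have := Algebra.finite_adjoin_simple_of_isIntegral h
  have : Finite (Algebra.adjoin K {a}) := Module.finite_of_finite K
  obtain ⟨i, j, hij, heq⟩ := Set.Finite.exists_lt_map_eq_of_forall_mem (f := (a ^ ·))
    (fun n => Subalgebra.pow_mem _ (Algebra.self_mem_adjoin_singleton K a) n) (Set.toFinite _)
  exact ⟨i, j - i, by omega, by rw [Nat.add_sub_cancel' hij.le]; exact heq.symm⟩

theorem exists_pow_add_eq_pow_of_isNilpotent_sub_pow_succ (hR : ringChar R ≠ 0) {a : R} {k : ℕ}
    (hk : 0 < k) (h : IsNilpotent (a - a ^ (k + 1))) : ∃ i d, 0 < d ∧ a ^ (i + d) = a ^ i := by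
  have : NeZero (ringChar R) := ⟨hR⟩
  let := ZMod.algebra R (ringChar R)
  exact exists_pow_add_eq_pow_of_isIntegral
    (isIntegral_of_isNilpotent_sub_pow_succ (K := ZMod (ringChar R)) hk h)

end Ring

theorem stronglyPeriodic_iff_no_commute (R : Type*) [Ring R] :
    StronglyPeriodicRing R ↔ ∀ a : R, ∃ p : R, IsPotent p ∧ a - p ∈ primeRadical R := by
  refine ⟨fun h a => (h a).imp fun _ hp => ⟨hp.1, hp.2.1⟩, fun h a => ?_⟩
  have hR : ringChar R ≠ 0 := by
    obtain ⟨k, hk, h2⟩ := (primeRadical R).exists_sub_pow_succ_mem (h 2)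
    have h4 : (2 : ℤ) ^ 2 ≤ 2 ^ (k + 1) := pow_le_pow_right₀ (by norm_num) (by omega)
    refine ringChar_ne_zero_of_isNilpotent_intCast (n := 2 - 2 ^ (k + 1)) (by linarith) ?_
    push_cast
    exact isNilpotent_of_mem_primeRadical h2
  obtain ⟨k, hk, ha⟩ := (primeRadical R).exists_sub_pow_succ_mem (h a)
  obtain ⟨i, d, hd, hper⟩ :=
    exists_pow_add_eq_pow_of_isNilpotent_sub_pow_succ hR hk (isNilpotent_of_mem_primeRadical ha)
  exact ⟨a ^ (i * k + 1), isPotent_pow_of_pow_add_eq_pow hd hper (by nlinarith),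
    (primeRadical R).sub_pow_mul_add_one_mem ha i, (Commute.self_pow a _).eq⟩
end

section
/- Every subring of a strongly periodic ring is strongly periodic. -/
section

variable {R : Type*} [Ring R]

namespace TwoSidedIdeal

lemma mem_sSup_of_isChain {c : Set (TwoSidedIdeal R)} (hc : IsChain (· ≤ ·) c)
    (hne : c.Nonempty) {x : R} : x ∈ sSup c ↔ ∃ I ∈ c, x ∈ I := by
  let U : TwoSidedIdeal R := .mk' (⋃ I ∈ c, (I : Set R))
    (by obtain ⟨I, hI⟩ := hne; exact Set.mem_biUnion hI I.zero_mem)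
    (fun {x y} hx hy => by
      obtain ⟨I, hI, hxI⟩ := Set.mem_iUnion₂.mp hx
      obtain ⟨J, hJ, hyJ⟩ := Set.mem_iUnion₂.mp hy
      rcases hc.total hI hJ with h | h
      · exact Set.mem_biUnion hJ (J.add_mem (h hxI) hyJ)
      · exact Set.mem_biUnion hI (I.add_mem hxI (h hyJ)))
    (fun {x} hx => by
      obtain ⟨I, hI, hxI⟩ := Set.mem_iUnion₂.mp hx
      exact Set.mem_biUnion hI (I.neg_mem hxI))
    (fun {x y} hy => by
      obtain ⟨I, hI, hyI⟩ := Set.mem_iUnion₂.mp hy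
      exact Set.mem_biUnion hI (I.mul_mem_left x y hyI))
    (fun {x y} hx => by
      obtain ⟨I, hI, hxI⟩ := Set.mem_iUnion₂.mp hx
      exact Set.mem_biUnion hI (I.mul_mem_right x y hxI))
  refine ⟨fun hx => ?_, fun ⟨I, hI, hxI⟩ => le_sSup hI hxI⟩
  have hU : sSup c ≤ U := sSup_le fun I hI y hy => (mem_mk' ..).mpr (Set.mem_biUnion hI hy)
  simpa using (mem_mk' ..).mp (hU hx)

lemma exists_maximal_disjoint {M : Set R} (hM : (0 : R) ∉ M) :
    ∃ P : TwoSidedIdeal R, Maximal (fun I : TwoSidedIdeal R => Disjoint (I : Set R) M) P := by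
  obtain ⟨P, -, hP⟩ := zorn_le_nonempty₀ {I : TwoSidedIdeal R | Disjoint (I : Set R) M}
    (fun c hc hchain I hI => ⟨sSup c, Set.disjoint_left.mpr fun x hx => by
        obtain ⟨J, hJ, hxJ⟩ := (mem_sSup_of_isChain hchain ⟨I, hI⟩).mp hx
        exact Set.disjoint_left.mp (hc hJ) hxJ,
      fun J hJ => le_sSup hJ⟩)
    ⊥ (by simpa [coe_bot] using hM)
  exact ⟨P, hP⟩

def leftColon (P : TwoSidedIdeal R) (b : R) : TwoSidedIdeal R :=
  .mk' {x | ∀ r, x * r * b ∈ P} (fun r => by simp)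
    (fun hx hy r => by simpa [add_mul] using P.add_mem (hx r) (hy r))
    (fun hx r => by simpa using P.neg_mem (hx r))
    (fun {x _} hy r => by simpa [mul_assoc] using P.mul_mem_left x _ (hy r))
    (fun {_ y} hx r => by simpa [mul_assoc] using hx (y * r))

lemma mem_leftColon {P : TwoSidedIdeal R} {b x : R} :
    x ∈ P.leftColon b ↔ ∀ r, x * r * b ∈ P :=
  mem_mk' ..

def rightColon (P : TwoSidedIdeal R) (a : R) : TwoSidedIdeal R :=
  .mk' {y | ∀ r, a * r * y ∈ P} (fun r => by simp)
    (fun hx hy r => by simpa [mul_add] using P.add_mem (hx r) (hy r))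
    (fun hx r => by simpa using P.neg_mem (hx r))
    (fun {x _} hy r => by simpa [mul_assoc] using hy (r * x))
    (fun {_ y} hx r => by simpa [mul_assoc] using P.mul_mem_right _ y (hx r))

lemma mem_rightColon {P : TwoSidedIdeal R} {a y : R} :
    y ∈ P.rightColon a ↔ ∀ r, a * r * y ∈ P :=
  mem_mk' ..

end TwoSidedIdeal

def IsMSequence (f : ℕ → R) : Prop :=
  ∀ n, ∃ r, f (n + 1) = f n * r * f n

def IsStronglyNilpotent (x : R) : Prop :=
  ∀ f : ℕ → R, IsMSequence f → f 0 = x → ∃ n, f n = 0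

namespace IsMSequence

variable {f : ℕ → R}

lemma exists_eq_mul_of_le (hf : IsMSequence f) {i j : ℕ} (hij : i ≤ j) :
    ∃ u v, f j = f i * u ∧ f j = v * f i := by
  induction j, hij using Nat.le_induction with
  | base => exact ⟨1, 1, (mul_one _).symm, (one_mul _).symm⟩
  | succ j _ ih =>
    obtain ⟨u, v, hu, hv⟩ := ih
    obtain ⟨r, hr⟩ := hf j
    refine ⟨u * r * f j, f j * r * v, ?_, ?_⟩
    · rw [hr]; nth_rw 1 [hu]; simp only [mul_assoc]
    · rw [hr]; nth_rw 2 [hv]; simp only [mul_assoc]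

lemma isPrime_of_maximal (hf : IsMSequence f) {P : TwoSidedIdeal R}
    (hP : Maximal (fun I : TwoSidedIdeal R => Disjoint (I : Set R) (Set.range f)) P) :
    P.IsPrime := by
  have hfP : ∀ n, f n ∉ P := fun n hn => Set.disjoint_left.mp hP.1 hn (Set.mem_range_self n)
  have meets (J : TwoSidedIdeal R) (hPJ : P ≤ J) (hJP : ¬ J ≤ P) : ∃ n, f n ∈ J := by
    by_contra! h
    exact hJP (hP.2 (Set.disjoint_left.mpr fun x hx ⟨n, hn⟩ => h n (hn ▸ hx)) hPJ)
  refine ⟨fun h => hfP 0 (Set.eq_univ_iff_forall.mp h (f 0)), fun a b hab => ?_⟩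
  by_contra! hP'
  -- By maximality, `a` forces some `f i` into `P.leftColon b`, and then `b` forces some `f j`
  -- into `P.rightColon (f i)`; the later terms of the sequence lie in `f i R f j ⊆ P`.
  obtain ⟨i, hi⟩ := meets (P.leftColon b) (fun x hx => TwoSidedIdeal.mem_leftColon.mpr
    fun r => P.mul_mem_right _ b (P.mul_mem_right x r hx))
    (fun h => hP'.1 (h (TwoSidedIdeal.mem_leftColon.mpr hab)))
  obtain ⟨j, hj⟩ := meets (P.rightColon (f i)) (fun x hx => TwoSidedIdeal.mem_rightColon.mpr
    fun r => P.mul_mem_left _ x hx)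
    (fun h => hP'.2 (h (TwoSidedIdeal.mem_rightColon.mpr (TwoSidedIdeal.mem_leftColon.mp hi))))
  obtain ⟨u, -, hu, -⟩ := hf.exists_eq_mul_of_le (le_max_left i j)
  obtain ⟨-, v, -, hv⟩ := hf.exists_eq_mul_of_le (le_max_right i j)
  obtain ⟨r, hr⟩ := hf (max i j)
  have e : f (max i j + 1) = f i * (u * r * v) * f j := by
    rw [hr]; nth_rw 1 [hu]; rw [hv]; simp only [mul_assoc]
  exact hfP (max i j + 1) (e ▸ TwoSidedIdeal.mem_rightColon.mp hj _)

end IsMSequence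

lemma isStronglyNilpotent_of_mem_primeRadical {x : R} (hx : x ∈ primeRadical R) :
    IsStronglyNilpotent x := by
  intro f hf hfx
  by_contra! hf0
  obtain ⟨P, hP⟩ := TwoSidedIdeal.exists_maximal_disjoint (M := Set.range f)
    fun ⟨n, hn⟩ => hf0 n hn
  have hxP : x ∈ P := (TwoSidedIdeal.mem_sInf _).mp hx P (hf.isPrime_of_maximal hP)
  exact Set.disjoint_left.mp hP.1 hxP ⟨0, hfx⟩

lemma mem_primeRadical_of_isStronglyNilpotent {x : R} (hx : IsStronglyNilpotent x) :
    x ∈ primeRadical R := by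
  refine (TwoSidedIdeal.mem_sInf _).mpr fun P hP => ?_
  by_contra hxP
  have step : ∀ y, ∃ r, y ∉ P → y * r * y ∉ P := fun y => by
    by_cases hy : y ∈ P
    · exact ⟨0, fun h => (h hy).elim⟩
    · by_contra! h
      exact (hP.2 y y fun r => (h r).2).elim hy hy
  choose r hr using step
  let f : ℕ → R := fun n => (fun y => y * r y * y)^[n] x
  have hf : IsMSequence f := fun n => ⟨r (f n), Function.iterate_succ_apply' _ n x⟩
  have hfP : ∀ n, f n ∉ P := fun n => by
    induction n with
    | zero => exact hxP
    | succ n ih => simpa only [f, Function.iterate_succ_apply'] using hr _ ih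
  obtain ⟨n, hn⟩ := hx f hf rfl
  exact hfP n (hn ▸ P.zero_mem)

lemma IsStronglyNilpotent.isNilpotent {x : R} (hx : IsStronglyNilpotent x) : IsNilpotent x := by
  obtain ⟨n, hn⟩ := hx (fun n => x ^ 2 ^ n)
    (fun n => ⟨1, by dsimp only; rw [mul_one, ← pow_add, pow_succ, mul_two]⟩) (pow_one x)
  exact ⟨_, hn⟩

lemma IsStronglyNilpotent.of_map {S : Type*} [Ring S] {φ : S →+* R}
    (hφ : Function.Injective φ) {x : S} (hx : IsStronglyNilpotent (φ x)) :
    IsStronglyNilpotent x := by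
  intro f hf hfx
  obtain ⟨n, hn⟩ := hx (φ ∘ f) (fun n => by
    obtain ⟨r, hr⟩ := hf n
    exact ⟨φ r, by simp [hr]⟩) (by simp [hfx])
  exact ⟨n, (map_eq_zero_iff φ hφ).mp hn⟩

lemma pow_add_mul_eq_of_pow_eq_pow_add {M : Type*} [Monoid M] {a : M} {i d r : ℕ}
    (h : a ^ i = a ^ (i + d)) (hr : i ≤ r) (t : ℕ) : a ^ (r + t * d) = a ^ r := by
  induction t with
  | zero => simp
  | succ t ih =>
    obtain ⟨s, rfl⟩ := Nat.exists_eq_add_of_le hr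
    calc a ^ (i + s + (t + 1) * d) = a ^ (i + d) * a ^ (s + t * d) := by
          rw [← pow_add]; ring_nf
      _ = a ^ (i + s + t * d) := by rw [← h, ← pow_add]; ring_nf
      _ = a ^ (i + s) := ih

lemma isPotent_pow_of_pow_eq_pow_add {a : R} {i d r : ℕ}
    (h : a ^ i = a ^ (i + d)) (hd : 0 < d) (hr : i ≤ r) : IsPotent (a ^ r) :=
  ⟨d + 1, by omega, by rw [← pow_mul, ← pow_add_mul_eq_of_pow_eq_pow_add h hr r]; ring_nf⟩

lemma sub_pow_mul_add_one_mem {I : TwoSidedIdeal R} {a : R} {n : ℕ}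
    (h : a - a ^ (n + 1) ∈ I) (t : ℕ) : a - a ^ (t * n + 1) ∈ I := by
  induction t with
  | zero => simp
  | succ t ih =>
    have e : a ^ (t * n) * (a - a ^ (n + 1)) = a ^ (t * n + 1) - a ^ ((t + 1) * n + 1) := by
      rw [mul_sub, ← pow_succ, ← pow_add]; ring_nf
    rw [show a - a ^ ((t + 1) * n + 1) = (a - a ^ (t * n + 1)) + a ^ (t * n) * (a - a ^ (n + 1))
      by rw [e]; abel]
    exact I.add_mem ih (I.mul_mem_left _ _ h)

lemma exists_pow_eq_pow_add_of_isIntegral {K A : Type*} [CommRing K] [Finite K] [Ring A]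
    [Algebra K A] {a : A} (ha : IsIntegral K a) : ∃ i d, 0 < d ∧ a ^ i = a ^ (i + d) := by
  let A₀ := Algebra.adjoin K {a}
  have : Module.Finite K A₀ := Module.Finite.iff_fg.mpr ha.fg_adjoin_singleton
  have : Finite A₀ := Module.finite_of_finite K
  obtain ⟨i, j, hij, h⟩ := Finite.exists_ne_map_eq_of_infinite
    fun n : ℕ => (⟨a ^ n, pow_mem (Algebra.self_mem_adjoin_singleton K a) n⟩ : A₀)
  have h : a ^ i = a ^ j := congrArg Subtype.val h
  rcases Nat.lt_or_gt_of_ne hij with hlt | hlt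
  · exact ⟨i, j - i, by omega, by rwa [Nat.add_sub_cancel' hlt.le]⟩
  · exact ⟨j, i - j, by omega, by rw [Nat.add_sub_cancel' hlt.le, h]⟩

open Polynomial in
lemma isIntegral_of_isNilpotent_sub_pow {K A : Type*} [CommRing K] [Ring A] [Algebra K A] {a : A}
    {m : ℕ} (hm : 2 ≤ m) (ha : IsNilpotent (a - a ^ m)) : IsIntegral K a := by
  obtain ⟨N, hN⟩ := ha.neg
  refine ⟨(X ^ m - X) ^ N, (monic_X_pow_sub (degree_X_le.trans_lt ?_)).pow N, ?_⟩
  · exact_mod_cast hm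
  · simpa using hN

lemma ringChar_ne_zero_of_isNilpotent_natCast {k : ℕ} (hk : k ≠ 0)
    (h : IsNilpotent (k : R)) : ringChar R ≠ 0 := by
  obtain ⟨N, hN⟩ := h
  intro h0
  rw [← Nat.cast_pow, ringChar.spec, h0, zero_dvd_iff] at hN
  exact pow_ne_zero N hk hN

theorem StronglyPeriodicRing.exists_sub_pow_mem (hR : StronglyPeriodicRing R)
    (a : R) : ∃ n, 2 ≤ n ∧ a - a ^ n ∈ primeRadical R := by
  obtain ⟨p, ⟨m, hm, hp⟩, hap, hcomm⟩ := hR a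
  refine ⟨m, hm, ?_⟩
  have h : a - a ^ m = (a - p) - (∑ i ∈ Finset.range m, a ^ i * p ^ (m - 1 - i)) * (a - p) := by
    rw [Commute.geom_sum₂_mul hcomm m, ← hp]; abel
  rw [h]
  exact (primeRadical R).sub_mem hap ((primeRadical R).mul_mem_left _ _ hap)

theorem stronglyPeriodicRing_of_forall_exists_sub_pow_mem
    (h : ∀ a : R, ∃ n, 2 ≤ n ∧ a - a ^ n ∈ primeRadical R) : StronglyPeriodicRing R := by
  have hnil : ∀ {x : R}, x ∈ primeRadical R → IsNilpotent x :=
    fun hx => (isStronglyNilpotent_of_mem_primeRadical hx).isNilpotent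
  obtain ⟨n, hn, h2⟩ := h 2
  have h4 : 2 ^ 2 ≤ 2 ^ n := Nat.pow_le_pow_right two_pos hn
  have hcast : ((2 ^ n - 2 : ℕ) : R) = -(2 - 2 ^ n) := by
    rw [Nat.cast_sub (by omega)]; push_cast; abel
  have : NeZero (ringChar R) := ⟨ringChar_ne_zero_of_isNilpotent_natCast (by omega)
    (hcast ▸ (hnil h2).neg)⟩
  let := ZMod.algebra R (ringChar R)
  intro a
  obtain ⟨m, hm, ha⟩ := h a
  obtain ⟨i, d, hd, hper⟩ := exists_pow_eq_pow_add_of_isIntegral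
    (isIntegral_of_isNilpotent_sub_pow (K := ZMod (ringChar R)) hm (hnil ha))
  obtain ⟨k, rfl⟩ : ∃ k, m = k + 1 := ⟨m - 1, by omega⟩
  exact ⟨a ^ (i * k + 1), isPotent_pow_of_pow_eq_pow_add hper hd (by nlinarith),
    sub_pow_mul_add_one_mem ha i, (Commute.self_pow a _).eq⟩

end

theorem subring_stronglyPeriodic {R : Type*} [Ring R] (hR : StronglyPeriodicRing R)
    (S : Subring R) : StronglyPeriodicRing S := by
  refine stronglyPeriodicRing_of_forall_exists_sub_pow_mem fun a => ?_
  obtain ⟨n, hn, ha⟩ := hR.exists_sub_pow_mem (a : R)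
  refine ⟨n, hn, mem_primeRadical_of_isStronglyNilpotent
    (IsStronglyNilpotent.of_map (φ := S.subtype) Subtype.val_injective ?_)⟩
  simpa using isStronglyNilpotent_of_mem_primeRadical ha
end
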